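/- arXiv:2211.06795 — 2 statements merged into one kernel-verified Lean document; each statement's English description precedes it below -/
import Mathlib

section
/- For every finite nonempty subset A of ℤ², the edge boundary satisfies |∂A| ≥ 4√|A|; equivalently, |A| ≤ |∂A|²/16. -/
open MeasureTheory ProbabilityTheory

/-- Nearest-neighbor adjacency on the square lattice `ℤ²`. -/
def adjZ2 (u v : ℤ × ℤ) : Prop :=
  (u.1 - v.1).natAbs + (u.2 - v.2).natAbs = 1

instance : DecidableRel adjZ2 := fun u v => by unfold adjZ2; infer_instance

/-- The square lattice `ℤ²` as a simple graph. -/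
def latticeGraph : SimpleGraph (ℤ × ℤ) where
  Adj := adjZ2
  symm := by
    constructor
    intro u v h
    unfold adjZ2 at *
    omega
  loopless := by constructor; intro v h; simp [adjZ2] at h

/-- A set of vertices is connected if the induced subgraph is connected. -/
def connSub (A : Set (ℤ × ℤ)) : Prop := (latticeGraph.induce A).Connected

/-- A finite nonempty set is simply connected if it is connected and its
complement is connected. -/
def simplyConn (A : Set (ℤ × ℤ)) : Prop :=
  A.Nonempty ∧ A.Finite ∧ connSub A ∧ connSub Aᶜ

/-- The edge boundary of `A`: nearest-neighbor edges with exactly one endpoint in `A`. -/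
def edgeBoundary (A : Set (ℤ × ℤ)) : Set (Sym2 (ℤ × ℤ)) :=
  {e | ∃ u v, e = s(u, v) ∧ adjZ2 u v ∧ u ∈ A ∧ v ∉ A}

/-- `|∂A|`, the number of boundary edges of `A`. -/
noncomputable def bdCard (A : Set (ℤ × ℤ)) : ℕ := (edgeBoundary A).ncard

/-- The box `Λ_N = {v : |v|_∞ ≤ N}`. -/
def latticeBox (N : ℕ) : Set (ℤ × ℤ) := {v | |v.1| ≤ (N : ℤ) ∧ |v.2| ≤ (N : ℤ)}

/-- The collection `𝒜_N` of lattice animals: nonempty simply connected subsets of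
`Λ_N` containing the origin. -/
def animals (N : ℕ) : Set (Set (ℤ × ℤ)) :=
  {A | A ⊆ latticeBox N ∧ (0, 0) ∈ A ∧ simplyConn A}

/-- Total field weight `Σ_{i ∈ A} Σ_{α=0}^{q-1} h_i^α` of a set `A`. -/
noncomputable def fieldWeight (q : ℕ) (h : (ℤ × ℤ) × Fin q → ℝ) (A : Set (ℤ × ℤ)) : ℝ :=
  ∑ᶠ i ∈ A, ∑ α : Fin q, h (i, α)

/-- The greedy lattice animal `G_N` for field realization `h`. -/
noncomputable def gla (q N : ℕ) (h : (ℤ × ℤ) × Fin q → ℝ) : ℝ :=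
  sSup {r | ∃ A ∈ animals N, r = fieldWeight q h A / (bdCard A : ℝ)}

/-! Each of the `r` rows met by `A` carries two boundary edges, one at each of its ends, and
likewise each of the `c` columns, so `|∂A| ≥ 2r + 2c`. On the other hand `A` lies in the product
of its two coordinate projections, so `|A| ≤ cr ≤ (2r + 2c)² / 16` by AM–GM.
Swapping coordinates reduces the column count to the row count. -/

open Set

lemma Sym2.mk_add_injective {G : Type*} [AddCommGroup G] [IsAddTorsionFree G] {d : G}
    (hd : d ≠ 0) : Function.Injective fun p : G => s(p, p + d) := by
  intro p q h
  rcases Sym2.eq_iff.mp h with ⟨hpq, -⟩ | ⟨hpq, hqp⟩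
  · exact hpq
  · refine absurd (two_nsmul_eq_zero.mp ?_) hd
    rw [two_nsmul]
    simpa [hpq, add_assoc] using hqp

lemma edgeBoundary_finite {A : Set (ℤ × ℤ)} (hA : A.Finite) : (edgeBoundary A).Finite := by
  have hsub : edgeBoundary A ⊆
      (fun q : (ℤ × ℤ) × (ℤ × ℤ) => s(q.1, q.1 + q.2)) '' (A ×ˢ Icc (-1, -1) (1, 1)) := by
    rintro e ⟨u, v, rfl, huv, hu, -⟩
    refine ⟨(u, v - u), ⟨hu, ?_⟩, by simp⟩
    unfold adjZ2 at huv
    simp only [mem_Icc, Prod.le_def, Prod.fst_sub, Prod.snd_sub]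
    omega
  exact ((hA.prod (finite_Icc _ _)).image _).subset hsub

def crossings (A : Set (ℤ × ℤ)) (d : ℤ × ℤ) : Set (ℤ × ℤ) := {p | Xor (p ∈ A) (p + d ∈ A)}

lemma crossings_finite {A : Set (ℤ × ℤ)} (hA : A.Finite) (d : ℤ × ℤ) :
    (crossings A d).Finite :=
  (hA.union (hA.preimage (add_left_injective d).injOn)).subset fun _ hp => Xor.or hp

lemma mk_mem_edgeBoundary_of_mem_crossings {A : Set (ℤ × ℤ)} {d p : ℤ × ℤ}
    (hd : adjZ2 p (p + d)) (hp : p ∈ crossings A d) : s(p, p + d) ∈ edgeBoundary A := by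
  rcases hp with ⟨hin, hout⟩ | ⟨hin, hout⟩
  · exact ⟨p, p + d, rfl, hd, hin, hout⟩
  · refine ⟨p + d, p, Sym2.eq_swap, ?_, hin, hout⟩
    unfold adjZ2 at hd ⊢
    omega

lemma ncard_crossings_add_ncard_crossings_le_bdCard {A : Set (ℤ × ℤ)} (hA : A.Finite) :
    (crossings A (1, 0)).ncard + (crossings A (0, 1)).ncard ≤ bdCard A := by
  set E₁ := (fun p : ℤ × ℤ => s(p, p + (1, 0))) '' crossings A (1, 0)
  set E₂ := (fun p : ℤ × ℤ => s(p, p + (0, 1))) '' crossings A (0, 1)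
  have hE₁ : E₁.ncard = (crossings A (1, 0)).ncard :=
    ncard_image_of_injective _ (Sym2.mk_add_injective (by simp))
  have hE₂ : E₂.ncard = (crossings A (0, 1)).ncard :=
    ncard_image_of_injective _ (Sym2.mk_add_injective (by simp))
  have hdisj : Disjoint E₁ E₂ := by
    rw [disjoint_left]
    rintro _ ⟨p, -, rfl⟩ ⟨q, -, hpq⟩
    rcases Sym2.eq_iff.mp hpq with ⟨h₁, h₂⟩ | ⟨h₁, h₂⟩ <;>
      simp only [Prod.ext_iff, Prod.fst_add, Prod.snd_add] at h₁ h₂ <;> omega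
  have hsub : E₁ ∪ E₂ ⊆ edgeBoundary A := by
    rintro _ (⟨p, hp, rfl⟩ | ⟨p, hp, rfl⟩) <;>
      exact mk_mem_edgeBoundary_of_mem_crossings (by simp [adjZ2]) hp
  calc (crossings A (1, 0)).ncard + (crossings A (0, 1)).ncard
      = (E₁ ∪ E₂).ncard := by
        rw [ncard_union_eq hdisj ((crossings_finite hA _).image _)
          ((crossings_finite hA _).image _), hE₁, hE₂]
    _ ≤ bdCard A := ncard_le_ncard hsub (edgeBoundary_finite hA)

lemma Set.Finite.csSup_add_one_notMem {S : Set ℤ} (hS : S.Finite) : sSup S + 1 ∉ S :=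
  fun h => by linarith [le_csSup hS.bddAbove h]

lemma Set.Finite.csInf_sub_one_notMem {S : Set ℤ} (hS : S.Finite) : sInf S - 1 ∉ S :=
  fun h => by linarith [csInf_le hS.bddBelow h]

lemma two_mul_ncard_image_snd_le_ncard_crossings {A : Set (ℤ × ℤ)} (hA : A.Finite) :
    2 * (Prod.snd '' A).ncard ≤ (crossings A (1, 0)).ncard := by
  set row : ℤ → Set ℤ := fun y => (fun x => (x, y)) ⁻¹' A
  have hrow_fin : ∀ y, (row y).Finite := fun y =>
    hA.preimage (Prod.mk_left_injective y).injOn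
  have hrow_ne : ∀ y ∈ Prod.snd '' A, (row y).Nonempty := by
    rintro _ ⟨p, hp, rfl⟩
    exact ⟨p.1, hp⟩
  set rowEnd : ℤ × Bool → ℤ × ℤ := fun yb =>
    (if yb.2 then sSup (row yb.1) else sInf (row yb.1) - 1, yb.1)
  have hmaps : ∀ yb ∈ (Prod.snd '' A) ×ˢ (univ : Set Bool), rowEnd yb ∈ crossings A (1, 0) := by
    rintro ⟨y, b | b⟩ ⟨hy, -⟩
    · refine Or.inr ⟨?_, (hrow_fin y).csInf_sub_one_notMem⟩
      simpa [rowEnd, row] using (hrow_ne y hy).csInf_mem (hrow_fin y)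
    · refine Or.inl ⟨(hrow_ne y hy).csSup_mem (hrow_fin y), ?_⟩
      simpa [rowEnd, row] using (hrow_fin y).csSup_add_one_notMem
  have hinj : InjOn rowEnd ((Prod.snd '' A) ×ˢ (univ : Set Bool)) := by
    rintro ⟨y, b⟩ ⟨hy, -⟩ ⟨y', b'⟩ - h
    obtain ⟨hx, rfl : y = y'⟩ := Prod.ext_iff.mp h
    have := csInf_le_csSup (hrow_ne y hy) (hrow_fin y).bddBelow (hrow_fin y).bddAbove
    cases b <;> cases b' <;> simp only [rowEnd, Bool.false_eq_true, if_true, if_false] at hx ⊢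
      <;> omega
  calc 2 * (Prod.snd '' A).ncard = ((Prod.snd '' A) ×ˢ (univ : Set Bool)).ncard := by
        rw [ncard_prod, ncard_univ, Nat.card_eq_fintype_card, Fintype.card_bool, mul_comm]
    _ ≤ (crossings A (1, 0)).ncard :=
      ncard_le_ncard_of_injOn rowEnd hmaps hinj (crossings_finite hA _)

lemma two_mul_ncard_image_fst_le_ncard_crossings {A : Set (ℤ × ℤ)} (hA : A.Finite) :
    2 * (Prod.fst '' A).ncard ≤ (crossings A (0, 1)).ncard := by
  have hswap : crossings A (0, 1) = Prod.swap '' crossings (Prod.swap '' A) (1, 0) := by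
    ext p
    simp [crossings, image_swap_eq_preimage_swap]
  have hfst : Prod.fst '' A = Prod.snd '' (Prod.swap '' A) := by
    rw [image_image]; rfl
  rw [hswap, ncard_image_of_injective _ Prod.swap_injective, hfst]
  exact two_mul_ncard_image_snd_le_ncard_crossings (hA.image _)

lemma ncard_le_ncard_image_fst_mul_ncard_image_snd {α β : Type*} {A : Set (α × β)}
    (hA : A.Finite) :
    A.ncard ≤ (Prod.fst '' A).ncard * (Prod.snd '' A).ncard := by
  rw [← ncard_prod]
  exact ncard_le_ncard subset_prod ((hA.image _).prod (hA.image _))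

theorem lattice_isoperimetric_inequality_general (A : Set (ℤ × ℤ)) (hfin : A.Finite) :
    4 * Real.sqrt (A.ncard) ≤ (bdCard A : ℝ) ∧
      (A.ncard : ℝ) ≤ (bdCard A : ℝ) ^ 2 / 16 := by
  have hcols := two_mul_ncard_image_fst_le_ncard_crossings hfin
  have hrows := two_mul_ncard_image_snd_le_ncard_crossings hfin
  have hbd := ncard_crossings_add_ncard_crossings_le_bdCard hfin
  have hprod := ncard_le_ncard_image_fst_mul_ncard_image_snd hfin
  set c := (Prod.fst '' A).ncard
  set r := (Prod.snd '' A).ncard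
  have hperim : (2 * c + 2 * r : ℝ) ≤ bdCard A := by exact_mod_cast by omega
  have harea : (A.ncard : ℝ) ≤ c * r := by exact_mod_cast hprod
  have hsq : (A.ncard : ℝ) ≤ (bdCard A : ℝ) ^ 2 / 16 := by
    nlinarith [sq_nonneg ((c : ℝ) - r), c.cast_nonneg (α := ℝ), r.cast_nonneg (α := ℝ)]
  refine ⟨?_, hsq⟩
  have hsqrt : Real.sqrt (A.ncard) ≤ bdCard A / 4 :=
    Real.sqrt_le_iff.mpr ⟨by positivity, by linarith⟩
  linarith

/-- Isoperimetric inequality on `ℤ²`: every finite nonempty `A ⊆ ℤ²` satisfies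
`|∂A| ≥ 4√|A|`; equivalently `|A| ≤ |∂A|²/16`. -/
theorem lattice_isoperimetric_inequality (A : Set (ℤ × ℤ)) (hfin : A.Finite)
    (hne : A.Nonempty) :
    4 * Real.sqrt (A.ncard) ≤ (bdCard A : ℝ) ∧
      (A.ncard : ℝ) ≤ (bdCard A : ℝ) ^ 2 / 16 :=
  lattice_isoperimetric_inequality_general A hfin
end

section
/- Let A be a finite nonempty connected subset of ℤ², let H_1, …, H_k be the finite connected components of ℤ² \ A, and let Ã = A ∪ H_1 ∪ ⋯ ∪ H_k be the simply connected fill-in of A. Then the edge boundary of A decomposes as the disjoint union ∂A = ∂Ã ⊔ ∂H_1 ⊔ ⋯ ⊔ ∂H_k; in particular |∂A| = |∂Ã| + Σ_{i=1}^{k} |∂H_i|, and Ã and each H_i are simply connected. -/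
open MeasureTheory ProbabilityTheory

/-- The connected component of `x` inside the induced subgraph on `S ⊆ ℤ²`. -/
def compOf (S : Set (ℤ × ℤ)) (x : ℤ × ℤ) : Set (ℤ × ℤ) :=
  {y | ∃ (hx : x ∈ S) (hy : y ∈ S), (latticeGraph.induce S).Reachable ⟨x, hx⟩ ⟨y, hy⟩}

/-!
Every edge of `∂A` joins a point of `A` to a point `v ∉ A`. If `v` lies in a hole `H i`, the edge
belongs to `∂(H i)`; otherwise `v` lies in the unique infinite component of `ℤ² \ A`, which is
exactly the complement of the fill-in `Ã`, and the edge belongs to `∂Ã`. Conversely a component of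
`ℤ² \ A` only has neighbours in `A`, so all edges of `∂Ã` and of the `∂(H i)` have their other
endpoint in `A`. Simple connectivity comes from the same picture: `Ã` and `(H i)ᶜ` are both `A`
together with whole components of `ℤ² \ A`, each of which touches the connected set `A`, while
`Ãᶜ` and `H i` are components themselves.
-/

namespace SimpleGraph

variable {V : Type*} (G : SimpleGraph V)

inductive ReachIn (S : Set V) : V → V → Prop
  | refl {x : V} : x ∈ S → ReachIn S x x
  | tail {x y z : V} : ReachIn S x y → G.Adj y z → z ∈ S → ReachIn S x z

namespace ReachIn

variable {G} {S T : Set V} {x y z : V}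

theorem mem_left (h : G.ReachIn S x y) : x ∈ S := by
  induction h with
  | refl hx => exact hx
  | tail _ _ _ ih => exact ih

theorem mem_right (h : G.ReachIn S x y) : y ∈ S := by
  cases h with
  | refl hx => exact hx
  | tail _ _ hz => exact hz

theorem trans (h : G.ReachIn S x y) (h' : G.ReachIn S y z) : G.ReachIn S x z := by
  induction h' with
  | refl _ => exact h
  | tail _ hadj hz ih => exact ih.tail hadj hz

theorem symm (h : G.ReachIn S x y) : G.ReachIn S y x := by
  induction h with
  | refl hx => exact .refl hx
  | tail r hadj hz ih => exact ((ReachIn.refl hz).tail hadj.symm r.mem_right).trans ih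

theorem mono (hST : S ⊆ T) (h : G.ReachIn S x y) : G.ReachIn T x y := by
  induction h with
  | refl hx => exact .refl (hST hx)
  | tail _ hadj hz ih => exact ih.tail hadj (hST hz)

theorem reachable_induce (h : G.ReachIn S x y) :
    (G.induce S).Reachable ⟨x, h.mem_left⟩ ⟨y, h.mem_right⟩ := by
  induction h with
  | refl _ => rfl
  | tail _ hadj _ ih => exact ih.trans (Adj.reachable hadj)

theorem exists_adj_notMem (h : G.ReachIn T x y) (hx : x ∈ S) (hy : y ∉ S) :
    ∃ u v, G.ReachIn S x u ∧ G.Adj u v ∧ v ∉ S := by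
  suffices ∀ w, G.ReachIn T x w → (∃ u v, G.ReachIn S x u ∧ G.Adj u v ∧ v ∉ S) ∨ G.ReachIn S x w
    from (this y h).resolve_right fun h' => hy h'.mem_right
  intro w hw
  induction hw with
  | refl _ => exact .inr (.refl hx)
  | @tail w' w _ hadj _ ih =>
    rcases ih with hexit | hw'
    · exact .inl hexit
    by_cases hw : w ∈ S
    · exact .inr (hw'.tail hadj hw)
    · exact .inl ⟨w', w, hw', hadj, hw⟩

end ReachIn

variable {G} {S : Set V}

theorem reachIn_of_reachable_induce {a b : S} (h : (G.induce S).Reachable a b) :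
    G.ReachIn S a b := by
  obtain ⟨p⟩ := h
  induction p with
  | nil => exact .refl (Subtype.prop _)
  | cons hadj _ ih => exact ((ReachIn.refl (Subtype.prop _)).tail hadj (Subtype.prop _)).trans ih

theorem connected_induce_iff_reachIn :
    (G.induce S).Connected ↔ S.Nonempty ∧ ∀ x ∈ S, ∀ y ∈ S, G.ReachIn S x y := by
  refine ⟨fun h => ⟨Set.nonempty_coe_sort.1 h.nonempty, fun x hx y hy =>
    reachIn_of_reachable_induce (h.preconnected ⟨x, hx⟩ ⟨y, hy⟩)⟩, fun ⟨hne, h⟩ => ?_⟩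
  have : Nonempty S := hne.to_subtype
  exact ⟨fun a b => (h a a.2 b b.2).reachable_induce⟩

theorem reachIn_of_forall_adj_succ {f : ℤ → V} (hadj : ∀ t, G.Adj (f t) (f (t + 1)))
    (hS : ∀ t, f t ∈ S) (a b : ℤ) : G.ReachIn S (f a) (f b) := by
  wlog hab : a ≤ b generalizing a b
  · exact (this b a (by omega)).symm
  induction b, hab using Int.leInduction with
  | base => exact .refl (hS a)
  | succ b _ ih => exact ih.tail (hadj b) (hS _)

end SimpleGraph

open SimpleGraph

section Components

variable {S : Set (ℤ × ℤ)} {x y u v : ℤ × ℤ}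

theorem mem_compOf_iff : y ∈ compOf S x ↔ latticeGraph.ReachIn S x y :=
  ⟨fun ⟨_, _, h⟩ => reachIn_of_reachable_induce h,
    fun h => ⟨h.mem_left, h.mem_right, h.reachable_induce⟩⟩

theorem compOf_subset : compOf S x ⊆ S := fun _ h => (mem_compOf_iff.1 h).mem_right

theorem mem_compOf_self (hx : x ∈ S) : x ∈ compOf S x := mem_compOf_iff.2 (.refl hx)

theorem mem_compOf_of_adj (hu : u ∈ compOf S x) (huv : adjZ2 u v) (hv : v ∈ S) :
    v ∈ compOf S x :=
  mem_compOf_iff.2 ((mem_compOf_iff.1 hu).tail huv hv)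

theorem compOf_eq_of_mem (hy : y ∈ compOf S x) : compOf S y = compOf S x := by
  have hxy := mem_compOf_iff.1 hy
  ext z
  simp only [mem_compOf_iff]
  exact ⟨hxy.trans, hxy.symm.trans⟩

theorem disjoint_compOf_of_ne {x' : ℤ × ℤ} (hne : compOf S x ≠ compOf S x') :
    Disjoint (compOf S x) (compOf S x') :=
  Set.disjoint_left.2 fun _ hy hy' => hne ((compOf_eq_of_mem hy).symm.trans (compOf_eq_of_mem hy'))

theorem SimpleGraph.ReachIn.within_compOf (h : latticeGraph.ReachIn S x y) :
    latticeGraph.ReachIn (compOf S x) x y := by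
  induction h with
  | refl hx => exact .refl (mem_compOf_self hx)
  | tail _ hadj hz ih => exact ih.tail hadj (mem_compOf_of_adj ih.mem_right hadj hz)

theorem connSub_compOf (hx : x ∈ S) : connSub (compOf S x) := by
  refine connected_induce_iff_reachIn.2 ⟨⟨x, mem_compOf_self hx⟩, fun a ha b hb => ?_⟩
  exact (mem_compOf_iff.1 ha).within_compOf.symm.trans (mem_compOf_iff.1 hb).within_compOf

end Components

section Geometry

variable {A : Set (ℤ × ℤ)} {N : ℕ} {u v : ℤ × ℤ}

theorem reachIn_horizontal {S : Set (ℤ × ℤ)} {b : ℤ} (hS : ∀ t, (t, b) ∈ S) (a c : ℤ) :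
    latticeGraph.ReachIn S (a, b) (c, b) :=
  reachIn_of_forall_adj_succ (f := fun t => (t, b)) (fun t => by simp [latticeGraph, adjZ2]) hS a c

theorem reachIn_vertical {S : Set (ℤ × ℤ)} {a : ℤ} (hS : ∀ t, (a, t) ∈ S) (b c : ℤ) :
    latticeGraph.ReachIn S (a, b) (a, c) :=
  reachIn_of_forall_adj_succ (f := fun t => (a, t)) (fun t => by simp [latticeGraph, adjZ2]) hS b c

theorem reachIn_univ (u v : ℤ × ℤ) : latticeGraph.ReachIn Set.univ u v :=
  (reachIn_horizontal (fun _ => Set.mem_univ _) u.1 v.1).trans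
    (reachIn_vertical (fun _ => Set.mem_univ _) u.2 v.2)

theorem latticeBox_finite (N : ℕ) : (latticeBox N).Finite :=
  (Set.finite_Icc (-(N : ℤ), -(N : ℤ)) (N, N)).subset fun v hv => by
    simp only [latticeBox, Set.mem_ofPred_eq, abs_le] at hv
    exact ⟨⟨hv.1.1, hv.2.1⟩, ⟨hv.1.2, hv.2.2⟩⟩

theorem exists_subset_latticeBox (hA : A.Finite) : ∃ N : ℕ, A ⊆ latticeBox N := by
  obtain ⟨N, hN⟩ := (hA.image fun v : ℤ × ℤ => v.1.natAbs ⊔ v.2.natAbs).bddAbove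
  refine ⟨N, fun v hv => ?_⟩
  have := hN (Set.mem_image_of_mem _ hv)
  simp only [sup_le_iff] at this
  exact ⟨abs_le.2 ⟨by omega, by omega⟩, abs_le.2 ⟨by omega, by omega⟩⟩

theorem notMem_latticeBox_of_lt_abs_left {a : ℤ} (ha : (N : ℤ) < |a|) (b : ℤ) :
    (a, b) ∉ latticeBox N := fun h => ha.not_ge h.1

theorem notMem_latticeBox_of_lt_abs_right {b : ℤ} (hb : (N : ℤ) < |b|) (a : ℤ) :
    (a, b) ∉ latticeBox N := fun h => hb.not_ge h.2

theorem infinite_compl_latticeBox (N : ℕ) : (latticeBox N)ᶜ.Infinite :=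
  Set.infinite_of_injective_forall_mem (f := fun t : ℤ => ((N : ℤ) + 1, t))
    (fun _ _ h => (Prod.mk.inj h).2)
    (notMem_latticeBox_of_lt_abs_left (by rw [abs_of_nonneg (by positivity)]; omega))

/-- Every point outside the box is joined to the corner `(N + 1, N + 1)` by at most two straight
segments. -/
theorem reachIn_compl_latticeBox (hu : u ∉ latticeBox N) (hv : v ∉ latticeBox N) :
    latticeGraph.ReachIn (latticeBox N)ᶜ u v := by
  have hM : (N : ℤ) < |(N : ℤ) + 1| := by rw [abs_of_nonneg (by positivity)]; omega
  have corner : ∀ w ∉ latticeBox N, latticeGraph.ReachIn (latticeBox N)ᶜ w (N + 1, N + 1) := by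
    rintro ⟨a, b⟩ hw
    simp only [latticeBox, Set.mem_ofPred_eq, not_and_or, not_le] at hw
    rcases hw with ha | hb
    · exact (reachIn_vertical (notMem_latticeBox_of_lt_abs_left ha) b _).trans
        (reachIn_horizontal (notMem_latticeBox_of_lt_abs_right hM) a _)
    · exact (reachIn_horizontal (notMem_latticeBox_of_lt_abs_right hb) a _).trans
        (reachIn_vertical (notMem_latticeBox_of_lt_abs_left hM) b _)
  exact (corner u hu).trans (corner v hv).symm

/-- The points outside a box containing `A` lie in a single component of `Aᶜ`, and every infinite
component of `Aᶜ` leaves the box. -/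
theorem exists_forall_infinite_compOf_compl_iff (hA : A.Finite) :
    ∃ z ∈ Aᶜ, ∀ w ∈ Aᶜ, (compOf Aᶜ w).Infinite ↔ w ∈ compOf Aᶜ z := by
  obtain ⟨N, hAN⟩ := exists_subset_latticeBox hA
  obtain ⟨z, hz⟩ := (infinite_compl_latticeBox N).nonempty
  have hbox : (latticeBox N)ᶜ ⊆ Aᶜ := Set.compl_subset_compl.2 hAN
  have hreach : ∀ p ∉ latticeBox N, latticeGraph.ReachIn Aᶜ z p := fun p hp =>
    (reachIn_compl_latticeBox hz hp).mono hbox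
  refine ⟨z, hbox hz, fun w hw => ⟨fun hinf => ?_, fun hwz => ?_⟩⟩
  · obtain ⟨p, hp, hpN⟩ := hinf.exists_notMem_finite (latticeBox_finite N)
    exact mem_compOf_iff.2 ((hreach p hpN).trans (mem_compOf_iff.1 hp).symm)
  · rw [compOf_eq_of_mem hwz]
    exact (infinite_compl_latticeBox N).mono fun p hp => mem_compOf_iff.2 (hreach p hp)

end Geometry

section Connectivity

variable {A T : Set (ℤ × ℤ)} {x y u v : ℤ × ℤ}

theorem exists_mem_compOf_compl_adj_mem (hA : A.Nonempty) (hy : y ∉ A) :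
    ∃ u ∈ compOf Aᶜ y, ∃ v ∈ A, adjZ2 u v := by
  obtain ⟨a, ha⟩ := hA
  obtain ⟨u, v, hyu, huv, hv⟩ :=
    (reachIn_univ y a).exists_adj_notMem (S := Aᶜ) hy (Set.notMem_compl_iff.2 ha)
  exact ⟨u, mem_compOf_iff.2 hyu, v, Set.notMem_compl_iff.1 hv, huv⟩

theorem mem_of_adj_of_mem_compOf_compl (huv : adjZ2 u v) (hu : u ∈ compOf Aᶜ x)
    (hv : v ∉ compOf Aᶜ x) : v ∈ A :=
  by_contra fun hvA => hv (mem_compOf_of_adj hu huv hvA)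

theorem connSub_of_compOf_compl_subset (hA : connSub A) (hAT : A ⊆ T)
    (hT : ∀ p ∈ T, p ∉ A → compOf Aᶜ p ⊆ T) : connSub T := by
  obtain ⟨⟨a, ha⟩, hAreach⟩ := connected_induce_iff_reachIn.1 hA
  have hreach : ∀ p ∈ T, latticeGraph.ReachIn T p a := by
    intro p hp
    by_cases hpA : p ∈ A
    · exact (hAreach p hpA a ha).mono hAT
    obtain ⟨u, hu, v, hv, huv⟩ := exists_mem_compOf_compl_adj_mem ⟨a, ha⟩ hpA
    have hpu := (mem_compOf_iff.1 hu).within_compOf.mono (hT p hp hpA)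
    exact (hpu.tail huv (hAT hv)).trans ((hAreach v hv a ha).mono hAT)
  exact connected_induce_iff_reachIn.2
    ⟨⟨a, hAT ha⟩, fun p hp q hq => (hreach p hp).trans (hreach q hq).symm⟩

theorem simplyConn_compOf_compl (hA : connSub A) (hx : x ∉ A) (hfin : (compOf Aᶜ x).Finite) :
    simplyConn (compOf Aᶜ x) := by
  refine ⟨⟨x, mem_compOf_self hx⟩, hfin, connSub_compOf hx,
    connSub_of_compOf_compl_subset hA (fun a ha hax => compOf_subset hax ha) ?_⟩
  intro p hpx hpA q hq hqx
  have hpx' : compOf Aᶜ p = compOf Aᶜ x := (compOf_eq_of_mem hq).symm.trans (compOf_eq_of_mem hqx)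
  exact hpx (hpx' ▸ mem_compOf_self hpA)

theorem compl_union_iUnion_eq_compOf {ι : Type*} {H : ι → Set (ℤ × ℤ)} {z : ℤ × ℤ}
    (hz : ∀ w ∈ Aᶜ, (compOf Aᶜ w).Infinite ↔ w ∈ compOf Aᶜ z) (hHfin : ∀ i, (H i).Finite)
    (hH : ∀ i, ∃ x, H i = compOf Aᶜ x)
    (hHall : ∀ x ∈ Aᶜ, (compOf Aᶜ x).Finite → ∃ i, H i = compOf Aᶜ x) :
    (A ∪ ⋃ i, H i)ᶜ = compOf Aᶜ z := by
  ext w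
  simp only [Set.compl_union, Set.compl_iUnion, Set.mem_inter_iff, Set.mem_iInter,
    Set.mem_compl_iff]
  refine ⟨fun ⟨hwA, hwH⟩ => (hz w hwA).1 fun hwfin => ?_, fun hwz => ⟨compOf_subset hwz, ?_⟩⟩
  · obtain ⟨i, hi⟩ := hHall w hwA hwfin
    exact hwH i (hi ▸ mem_compOf_self hwA)
  · intro i hwi
    obtain ⟨x, hx⟩ := hH i
    have hHi := hHfin i
    rw [hx, ← compOf_eq_of_mem (hx ▸ hwi)] at hHi
    exact (hz w (compOf_subset hwz)).2 hwz hHi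

theorem simplyConn_union_iUnion_compOf {ι : Type*} [Finite ι] {H : ι → Set (ℤ × ℤ)}
    (hfin : A.Finite) (hconn : connSub A) (hHfin : ∀ i, (H i).Finite)
    (hH : ∀ i, ∃ x, H i = compOf Aᶜ x)
    (hHall : ∀ x ∈ Aᶜ, (compOf Aᶜ x).Finite → ∃ i, H i = compOf Aᶜ x) :
    simplyConn (A ∪ ⋃ i, H i) := by
  obtain ⟨z, hzA, hz⟩ := exists_forall_infinite_compOf_compl_iff hfin
  refine ⟨(Set.nonempty_coe_sort.1 hconn.nonempty).mono Set.subset_union_left,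
    hfin.union (Set.finite_iUnion hHfin),
    connSub_of_compOf_compl_subset hconn Set.subset_union_left ?_,
    compl_union_iUnion_eq_compOf hz hHfin hH hHall ▸ connSub_compOf hzA⟩
  rintro p (hpA | hpH) hpA'
  · exact absurd hpA hpA'
  obtain ⟨i, hpi⟩ := Set.mem_iUnion.1 hpH
  obtain ⟨x, hx⟩ := hH i
  rw [compOf_eq_of_mem (hx ▸ hpi), ← hx]
  exact (Set.subset_iUnion H i).trans Set.subset_union_right

end Connectivity

section EdgeBoundary

open Function

variable {S A : Set (ℤ × ℤ)} {ι : Type*} {H : ι → Set (ℤ × ℤ)}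

theorem edgeBoundary_finite_s5 (hS : S.Finite) : (edgeBoundary S).Finite := by
  refine (hS.biUnion fun u _ =>
    (Set.finite_Icc (u - (1, 1)) (u + (1, 1))).image fun v => s(u, v)).subset ?_
  rintro e ⟨u, v, rfl, huv, hu, -⟩
  refine Set.mem_biUnion hu ⟨v, ?_, rfl⟩
  simp only [adjZ2] at huv
  simp only [Set.mem_Icc, Prod.le_def, Prod.fst_sub, Prod.snd_sub, Prod.fst_add, Prod.snd_add]
  omega

theorem mk_notMem_edgeBoundary {u v : ℤ × ℤ} (h : u ∈ S ↔ v ∈ S) : s(u, v) ∉ edgeBoundary S := by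
  rintro ⟨a, b, hab, -, ha, hb⟩
  rcases Sym2.eq_iff.1 hab with ⟨rfl, rfl⟩ | ⟨rfl, rfl⟩ <;> tauto

theorem edgeBoundary_eq_union_iUnion (hHA : ∀ i, H i ⊆ Aᶜ)
    (hHnbr : ∀ i u v, adjZ2 u v → u ∈ H i → v ∉ H i → v ∈ A) :
    edgeBoundary A = edgeBoundary (A ∪ ⋃ i, H i) ∪ ⋃ i, edgeBoundary (H i) := by
  ext e
  constructor
  · rintro ⟨u, v, rfl, huv, hu, hv⟩
    by_cases hvH : ∃ i, v ∈ H i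
    · obtain ⟨i, hvi⟩ := hvH
      exact .inr (Set.mem_iUnion.2
        ⟨i, v, u, Sym2.eq_swap, latticeGraph.adj_symm huv, hvi, fun hui => hHA i hui hu⟩)
    · refine .inl ⟨u, v, rfl, huv, .inl hu, ?_⟩
      simpa [hv] using hvH
  · rintro (⟨u, v, rfl, huv, hu, hv⟩ | he)
    · have hvA : v ∉ A := fun h => hv (.inl h)
      refine ⟨u, v, rfl, huv, hu.resolve_right fun hu => ?_, hvA⟩
      obtain ⟨i, hui⟩ := Set.mem_iUnion.1 hu
      exact hvA (hHnbr i u v huv hui fun hvi => hv (.inr (Set.mem_iUnion.2 ⟨i, hvi⟩)))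
    · obtain ⟨i, u, v, rfl, huv, hu, hv⟩ := Set.mem_iUnion.1 he
      exact ⟨v, u, Sym2.eq_swap, latticeGraph.adj_symm huv, hHnbr i u v huv hu hv, hHA i hu⟩

theorem disjoint_edgeBoundary_union_iUnion
    (hHnbr : ∀ i u v, adjZ2 u v → u ∈ H i → v ∉ H i → v ∈ A) (i : ι) :
    Disjoint (edgeBoundary (A ∪ ⋃ j, H j)) (edgeBoundary (H i)) := by
  refine Set.disjoint_right.2 ?_
  rintro e ⟨u, v, rfl, huv, hu, hv⟩
  exact mk_notMem_edgeBoundary (iff_of_true (.inr (Set.mem_iUnion.2 ⟨i, hu⟩))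
    (.inl (hHnbr i u v huv hu hv)))

theorem pairwise_disjoint_edgeBoundary (hHA : ∀ i, H i ⊆ Aᶜ)
    (hHnbr : ∀ i u v, adjZ2 u v → u ∈ H i → v ∉ H i → v ∈ A)
    (hHdisj : Pairwise (Disjoint on H)) :
    Pairwise (Disjoint on fun i => edgeBoundary (H i)) := by
  intro i j hij
  refine Set.disjoint_left.2 ?_
  rintro e ⟨u, v, rfl, huv, hu, hv⟩
  exact mk_notMem_edgeBoundary (iff_of_false (Set.disjoint_left.1 (hHdisj hij) hu)
    fun hvj => hHA j hvj (hHnbr i u v huv hu hv))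

theorem ncard_edgeBoundary_eq_add_sum [Fintype ι] (hHA : ∀ i, H i ⊆ Aᶜ)
    (hHnbr : ∀ i u v, adjZ2 u v → u ∈ H i → v ∉ H i → v ∈ A)
    (hfin : A.Finite) (hHfin : ∀ i, (H i).Finite)
    (hHdisj : Pairwise (Disjoint on H)) :
    (edgeBoundary A).ncard =
      (edgeBoundary (A ∪ ⋃ i, H i)).ncard + ∑ i, (edgeBoundary (H i)).ncard := by
  have hbd_fin : ∀ i, (edgeBoundary (H i)).Finite := fun i => edgeBoundary_finite_s5 (hHfin i)
  rw [edgeBoundary_eq_union_iUnion hHA hHnbr,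
    Set.ncard_union_eq (Set.disjoint_iUnion_right.2 (disjoint_edgeBoundary_union_iUnion hHnbr))
      (edgeBoundary_finite_s5 (hfin.union (Set.finite_iUnion hHfin))) (Set.finite_iUnion hbd_fin),
    Set.ncard_iUnion_of_finite hbd_fin (pairwise_disjoint_edgeBoundary hHA hHnbr hHdisj),
    finsum_eq_sum_of_fintype]

end EdgeBoundary

theorem boundary_decomposition_into_fill_in_and_holes_general
    (A : Set (ℤ × ℤ)) (hfin : A.Finite) (hconn : connSub A)
    (k : ℕ) (H : Fin k → Set (ℤ × ℤ))
    (hHfin : ∀ i, (H i).Finite)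
    (hHcomp : ∀ i, ∃ x, ∃ _ : x ∈ Aᶜ, H i = compOf Aᶜ x)
    (hHinj : Function.Injective H)
    (hHall : ∀ x, ∀ _ : x ∈ Aᶜ, (compOf Aᶜ x).Finite → ∃ i, H i = compOf Aᶜ x) :
    edgeBoundary A = edgeBoundary (A ∪ ⋃ i, H i) ∪ ⋃ i, edgeBoundary (H i) ∧
    (∀ i, Disjoint (edgeBoundary (A ∪ ⋃ j, H j)) (edgeBoundary (H i))) ∧
    (∀ i j, i ≠ j → Disjoint (edgeBoundary (H i)) (edgeBoundary (H j))) ∧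
    (edgeBoundary A).ncard =
      (edgeBoundary (A ∪ ⋃ i, H i)).ncard + ∑ i, (edgeBoundary (H i)).ncard ∧
    simplyConn (A ∪ ⋃ i, H i) ∧ ∀ i, simplyConn (H i) := by
  choose x hxA hHx using hHcomp
  have hHA : ∀ i, H i ⊆ Aᶜ := fun i => hHx i ▸ compOf_subset
  have hHnbr : ∀ i u v, adjZ2 u v → u ∈ H i → v ∉ H i → v ∈ A := fun i _ _ =>
    hHx i ▸ mem_of_adj_of_mem_compOf_compl
  have hHdisj : Pairwise fun i j => Disjoint (H i) (H j) := fun i j hij => by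
    have hne := hHinj.ne hij
    show Disjoint (H i) (H j)
    rw [hHx i, hHx j] at hne ⊢
    exact disjoint_compOf_of_ne hne
  exact ⟨edgeBoundary_eq_union_iUnion hHA hHnbr, disjoint_edgeBoundary_union_iUnion hHnbr,
    fun i j hij => pairwise_disjoint_edgeBoundary hHA hHnbr hHdisj hij,
    ncard_edgeBoundary_eq_add_sum hHA hHnbr hfin hHfin hHdisj,
    simplyConn_union_iUnion_compOf hfin hconn hHfin (fun i => ⟨x i, hHx i⟩) hHall,
    fun i => hHx i ▸ simplyConn_compOf_compl hconn (hxA i) (hHx i ▸ hHfin i)⟩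

/-- Boundary decomposition: if `A` is finite, nonempty and connected, and
`H 0, …, H (k-1)` enumerate (without repetition) the finite connected components of
`ℤ² \ A` (the holes of `A`), then with `Ã = A ∪ ⋃ i, H i` the fill-in of `A`, the edge
boundary of `A` is the disjoint union of `∂Ã` and the `∂(H i)`; in particular
`|∂A| = |∂Ã| + Σ_i |∂(H i)|`, and `Ã` and each `H i` are simply connected. -/
theorem boundary_decomposition_into_fill_in_and_holes
    (A : Set (ℤ × ℤ)) (hfin : A.Finite) (hne : A.Nonempty) (hconn : connSub A)
    (k : ℕ) (H : Fin k → Set (ℤ × ℤ))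
    (hHfin : ∀ i, (H i).Finite)
    (hHcomp : ∀ i, ∃ x, ∃ _ : x ∈ Aᶜ, H i = compOf Aᶜ x)
    (hHinj : Function.Injective H)
    (hHall : ∀ x, ∀ _ : x ∈ Aᶜ, (compOf Aᶜ x).Finite → ∃ i, H i = compOf Aᶜ x) :
    edgeBoundary A = edgeBoundary (A ∪ ⋃ i, H i) ∪ ⋃ i, edgeBoundary (H i) ∧
    (∀ i, Disjoint (edgeBoundary (A ∪ ⋃ j, H j)) (edgeBoundary (H i))) ∧
    (∀ i j, i ≠ j → Disjoint (edgeBoundary (H i)) (edgeBoundary (H j))) ∧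
    (edgeBoundary A).ncard =
      (edgeBoundary (A ∪ ⋃ i, H i)).ncard + ∑ i, (edgeBoundary (H i)).ncard ∧
    simplyConn (A ∪ ⋃ i, H i) ∧ ∀ i, simplyConn (H i) :=
  boundary_decomposition_into_fill_in_and_holes_general A hfin hconn k H hHfin hHcomp hHinj hHall
end
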